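/- arXiv:math/0608669 — 5 statements merged into one kernel-verified Lean document; each statement's English description precedes it below -/
import Mathlib

section
/- Let λ ∈ ℂ and let e : (0,∞) → ℂ be a function. Let f, g, h be tempered distributions on ℝ such that for every a > 0 and every Schwartz function φ: ⟨f, φ(·/a)⟩ = a^{λ+1}(⟨f, φ⟩ + e(a)⟨g, φ⟩) and ⟨g, φ(·/a)⟩ = a^{λ+1}(⟨g, φ⟩ + e(a)⟨h, φ⟩). Then for all a, b > 0 and every Schwartz φ: (e(ab) − e(a) − e(b))⟨g, φ⟩ = e(a)e(b)⟨h, φ⟩. -/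
/-!
Dilating by `a * b` is dilating by `b` and then by `a`. Expanding `⟨f, φ(·/(ab))⟩` both ways with
the twisted homogeneity of `f` and `g`, and cancelling the nonzero factor
`(ab)^(λ+1) = a^(λ+1) b^(λ+1)`, leaves the identity for `e`.
-/

open MeasureTheory SchwartzMap Complex Finset

noncomputable section

variable {E : Type*} [NormedAddCommGroup E] [NormedSpace ℝ E]

/-- The dilation operator on Schwartz functions: for `a ≠ 0`,
`dilate a φ = fun x => φ (a⁻¹ • x)`, i.e. `x ↦ φ (x / a)` (junk value `0` for `a = 0`). -/
def dilate (a : ℝ) : 𝓢(E, ℂ) →L[ℝ] 𝓢(E, ℂ) :=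
  if h : a = 0 then 0 else
    SchwartzMap.compCLM ℝ (g := fun x : E => a⁻¹ • x)
      (by exact (a⁻¹ • ContinuousLinearMap.id ℝ E).hasTemperateGrowth)
      ⟨1, |a|, fun x => by
        have ha : a ≠ 0 := h
        have h0 : |a| ≠ 0 := abs_ne_zero.mpr ha
        have hx : ‖a⁻¹ • x‖ = |a|⁻¹ * ‖x‖ := by
          rw [norm_smul, norm_inv, Real.norm_eq_abs]
        have key : |a| * (1 + ‖a⁻¹ • x‖) ^ 1 = |a| + ‖x‖ := by
          rw [pow_one, hx, mul_add, mul_one, ← mul_assoc, mul_inv_cancel₀ h0, one_mul]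
        calc ‖x‖ ≤ |a| + ‖x‖ := le_add_of_nonneg_left (abs_nonneg a)
          _ = |a| * (1 + ‖a⁻¹ • x‖) ^ 1 := key.symm⟩

lemma dilate_apply (a : ℝ) (ha : a ≠ 0) (φ : 𝓢(E, ℂ)) (x : E) :
    dilate a φ x = φ (a⁻¹ • x) := by
  simp [dilate, dif_neg ha]
  rfl

/-- On `ℝ`, `dilate a φ` is the function `x ↦ φ (x / a)`. -/
lemma dilate_apply_real (a : ℝ) (ha : a ≠ 0) (φ : 𝓢(ℝ, ℂ)) (x : ℝ) :
    dilate a φ x = φ (x / a) := by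
  rw [dilate_apply a ha, smul_eq_mul, inv_mul_eq_div]

/-- A tempered distribution on `ℝ` is homogeneous of degree `λ` if
`⟨f, φ(·/a)⟩ = a^(λ+1) ⟨f, φ⟩` for all `a > 0` and all Schwartz `φ`. -/
def IsHomogeneous (lam : ℂ) (f : 𝓢(ℝ, ℂ) →L[ℂ] ℂ) : Prop :=
  ∀ a : ℝ, 0 < a → ∀ φ : 𝓢(ℝ, ℂ), f (dilate a φ) = (a : ℂ) ^ (lam + 1) * f φ

lemma dilate_mul {a b : ℝ} (ha : a ≠ 0) (hb : b ≠ 0) (φ : 𝓢(E, ℂ)) :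
    dilate (a * b) φ = dilate a (dilate b φ) := by
  ext x
  rw [dilate_apply _ (mul_ne_zero ha hb), dilate_apply _ ha, dilate_apply _ hb,
    smul_smul, mul_inv, mul_comm]

/-- if `⟨f, φ(·/a)⟩ = a^(λ+1)(⟨f, φ⟩ + e(a)⟨g, φ⟩)` and
`⟨g, φ(·/a)⟩ = a^(λ+1)(⟨g, φ⟩ + e(a)⟨h, φ⟩)` for all `a > 0`, then
`(e(ab) − e(a) − e(b))⟨g, φ⟩ = e(a)e(b)⟨h, φ⟩` for all `a, b > 0` and Schwartz `φ`. -/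
theorem stmt_1 (lam : ℂ) (e : ℝ → ℂ) (f g h : 𝓢(ℝ, ℂ) →L[ℂ] ℂ)
    (hf : ∀ a : ℝ, 0 < a → ∀ φ : 𝓢(ℝ, ℂ),
      f (dilate a φ) = (a : ℂ) ^ (lam + 1) * (f φ + e a * g φ))
    (hg : ∀ a : ℝ, 0 < a → ∀ φ : 𝓢(ℝ, ℂ),
      g (dilate a φ) = (a : ℂ) ^ (lam + 1) * (g φ + e a * h φ)) :
    ∀ a b : ℝ, 0 < a → 0 < b → ∀ φ : 𝓢(ℝ, ℂ),
      (e (a * b) - e a - e b) * g φ = e a * e b * h φ := by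
  intro a b ha hb φ
  set c := (a : ℂ) ^ (lam + 1) * (b : ℂ) ^ (lam + 1)
  have hc : c ≠ 0 := by simp [c, ha.ne', hb.ne']
  have two_ways :
      c * (f φ + e (a * b) * g φ) = c * (f φ + e b * g φ + e a * (g φ + e b * h φ)) :=
    calc c * (f φ + e (a * b) * g φ) = f (dilate (a * b) φ) := by
          rw [hf _ (mul_pos ha hb), ofReal_mul, mul_cpow_ofReal_nonneg ha.le hb.le]
      _ = f (dilate a (dilate b φ)) := by rw [dilate_mul ha.ne' hb.ne']
      _ = c * (f φ + e b * g φ + e a * (g φ + e b * h φ)) := by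
          rw [hf _ ha, hf _ hb, hg _ hb]
          ring
  linear_combination mul_left_cancel₀ hc two_ways

end
end

section
/- Let n ≥ 1 be an integer, k ∈ ℕ, and φ : ℝ → ℂ a Schwartz function. For m ∈ ℕ define F_m(φ) := ∫₀^∞ x^{−n}(log x)^m ( φ(x) − Σ_{j=0}^{n−2} (x^j/j!) φ^{(j)}(0) − (x^{n−1}/(n−1)!) φ^{(n−1)}(0) · 1_{[0,1]}(x) ) dx (an absolutely convergent integral). Then for every a > 0: F_k applied to the dilated function x ↦ φ(x/a) equals a^{−n+1} [ Σ_{r=0}^{k} (k choose r)(log a)^r F_{k−r}(φ) + ((log a)^{k+1}/((k+1)(n−1)!)) φ^{(n−1)}(0) ]. -/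
open MeasureTheory SchwartzMap Complex Finset

noncomputable section

variable {E : Type*} [NormedAddCommGroup E] [NormedSpace ℝ E]

/-- The regularized functional
`F_m(φ) = ⟨P(x₊^(−n) log^m x₊), φ⟩ = ∫₀^∞ x^(−n) (log x)^m (φ(x) −
  ∑_{j=0}^{n−2} x^j/j! φ^(j)(0) − (x^(n−1)/(n−1)!) φ^(n−1)(0) 1_{[0,1]}(x)) dx`. -/
def Freg (n m : ℕ) (φ : 𝓢(ℝ, ℂ)) : ℂ :=
  ∫ x in Set.Ioi (0 : ℝ), (x : ℂ) ^ (-(n : ℤ)) * (Real.log x : ℂ) ^ m *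
    (φ x - (∑ j ∈ Finset.range (n - 1),
        ((x : ℂ) ^ j / (j.factorial : ℂ)) * iteratedDeriv j (⇑φ) 0)
      - ((x : ℂ) ^ (n - 1) / ((n - 1).factorial : ℂ)) * iteratedDeriv (n - 1) (⇑φ) 0 *
          Set.indicator (Set.Icc (0 : ℝ) 1) (fun _ => (1 : ℂ)) x)

/-! Substituting `x = a y` turns `F_k(φ(·/a))` into `a^(1-n)` times an integral of the same shape
for `φ`, with weight `(log a + log y)^k` and with the cutoff of the top Taylor term moved from
`[0, 1]` to `[0, 1/a]`. Expanding the binomial gives `∑ (k choose r) (log a)^r F_{k-r}(φ)`, and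
moving the cutoff back to `[0, 1]` costs
`φ^(n-1)(0)/(n-1)! · ∫_{1/a}^1 (log a + log y)^k dy/y = φ^(n-1)(0) (log a)^(k+1)/((k+1)(n-1)!)`.
All integrals converge absolutely by Taylor's theorem near `0` and Schwartz decay at infinity. -/

open Set

lemma abs_log_pow_le_rpow_of_one_le (m : ℕ) {ε : ℝ} (hε : 0 < ε) :
    ∃ C, ∀ x : ℝ, 1 ≤ x → |Real.log x| ^ m ≤ C * x ^ ε := by
  set δ := ε / (m + 1) with hδ
  have hδ0 : 0 < δ := by positivity
  refine ⟨δ⁻¹ ^ m, fun x hx => ?_⟩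
  have hx0 : 0 ≤ x := zero_le_one.trans hx
  have hlog : 0 ≤ Real.log x := Real.log_nonneg hx
  calc |Real.log x| ^ m ≤ (x ^ δ / δ) ^ m := by
        rw [abs_of_nonneg hlog]
        exact pow_le_pow_left₀ hlog (Real.log_le_rpow_div hx0 hδ0) m
    _ = δ⁻¹ ^ m * x ^ (δ * m) := by
        rw [Real.rpow_mul hx0, Real.rpow_natCast]; ring
    _ ≤ δ⁻¹ ^ m * x ^ ε := by
        gcongr
        rw [hδ, div_mul_eq_mul_div, div_le_iff₀ (by positivity)]; nlinarith

lemma abs_log_pow_le_rpow_of_le_one (m : ℕ) {ε : ℝ} (hε : 0 < ε) :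
    ∃ C, ∀ x : ℝ, 0 < x → x ≤ 1 → |Real.log x| ^ m ≤ C * x ^ (-ε) := by
  obtain ⟨C, hC⟩ := abs_log_pow_le_rpow_of_one_le m hε
  refine ⟨C, fun x hx0 hx1 => ?_⟩
  simpa [Real.log_inv, Real.inv_rpow hx0.le, Real.rpow_neg hx0.le] using
    hC x⁻¹ (one_le_inv₀ hx0 |>.mpr hx1)

lemma integrableOn_Ioi_zero_of_norm_le_rpow {F : Type*} [NormedAddCommGroup F] {f : ℝ → F}
    (hf : AEStronglyMeasurable f (volume.restrict (Ioi 0))) {s t C D : ℝ}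
    (hs : -1 < s) (ht : t < -1) (h0 : ∀ x ∈ Ioc (0 : ℝ) 1, ‖f x‖ ≤ C * x ^ s)
    (h1 : ∀ x ∈ Ioi (1 : ℝ), ‖f x‖ ≤ D * x ^ t) :
    IntegrableOn f (Ioi 0) := by
  rw [← Ioc_union_Ioi_eq_Ioi zero_le_one]
  refine IntegrableOn.union ?_ ?_
  · refine Integrable.mono' (((intervalIntegrable_iff_integrableOn_Ioc_of_le zero_le_one).mp
      (intervalIntegral.intervalIntegrable_rpow' hs)).const_mul C)
      (hf.mono_set Ioc_subset_Ioi_self) ?_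
    exact (ae_restrict_iff' measurableSet_Ioc).mpr (Filter.Eventually.of_forall h0)
  · refine Integrable.mono' ((integrableOn_Ioi_rpow_of_lt ht one_pos).const_mul D)
      (hf.mono_set (Ioi_subset_Ioi zero_le_one)) ?_
    exact (ae_restrict_iff' measurableSet_Ioi).mpr (Filter.Eventually.of_forall h1)

def cutoffTaylorRemainder (p : ℕ) (c : ℝ) (f : ℝ → ℂ) (x : ℝ) : ℂ :=
  f x - ∑ j ∈ range p, ((x : ℂ) ^ j / (j.factorial : ℂ)) * iteratedDeriv j f 0
    - ((x : ℂ) ^ p / (p.factorial : ℂ)) * iteratedDeriv p f 0 *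
        indicator (Icc 0 c) (fun _ => (1 : ℂ)) x

lemma Freg_succ_eq_integral (p m : ℕ) (φ : 𝓢(ℝ, ℂ)) :
    Freg (p + 1) m φ = ∫ x in Ioi (0 : ℝ),
      (x : ℂ) ^ (-((p + 1 : ℕ) : ℤ)) * (Real.log x : ℂ) ^ m * cutoffTaylorRemainder p 1 φ x := by
  simp only [Freg, Nat.add_sub_cancel]
  rfl

lemma exists_norm_sub_taylor_le {f : ℝ → ℂ} (p : ℕ) (hf : ContDiff ℝ (p + 1) f) :
    ∃ C, ∀ x ∈ Icc (0 : ℝ) 1,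
      ‖f x - ∑ j ∈ range (p + 1), ((x : ℂ) ^ j / (j.factorial : ℂ)) * iteratedDeriv j f 0‖
        ≤ C * x ^ (p + 1) := by
  have hwithin : ∀ j ≤ p + 1, ∀ y ∈ Icc (0 : ℝ) 1,
      iteratedDerivWithin j f (Icc 0 1) y = iteratedDeriv j f y := fun j hj y hy =>
    iteratedDerivWithin_eq_iteratedDeriv (uniqueDiffOn_Icc zero_lt_one)
      ((hf.of_le (by exact_mod_cast hj)).contDiffAt) hy
  obtain ⟨C, hC⟩ := isCompact_Icc.exists_bound_of_continuousOn
    (hf.continuous_iteratedDeriv (p + 1) le_rfl).continuousOn (s := Icc (0 : ℝ) 1)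
  refine ⟨C / p.factorial, fun x hx => ?_⟩
  have htaylor := taylor_mean_remainder_bound zero_le_one hf.contDiffOn hx
    (fun y hy => (hwithin _ le_rfl y hy).symm ▸ hC y hy)
  have hpoly : taylorWithinEval f p (Icc 0 1) 0 x
      = ∑ j ∈ range (p + 1), ((x : ℂ) ^ j / (j.factorial : ℂ)) * iteratedDeriv j f 0 := by
    rw [taylor_within_apply]
    refine sum_congr rfl fun j hj => ?_
    rw [hwithin j (by rw [Finset.mem_range] at hj; omega) 0 (left_mem_Icc.mpr zero_le_one),
      Complex.real_smul]
    push_cast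
    ring
  rw [hpoly, sub_zero] at htaylor
  exact htaylor.trans_eq (by ring)

lemma norm_cutoffTaylorRemainder_le_of_le_one {f : ℝ → ℂ} (p : ℕ) (hf : ContDiff ℝ (p + 1) f) :
    ∃ C, ∀ x ∈ Ioc (0 : ℝ) 1, ‖cutoffTaylorRemainder p 1 f x‖ ≤ C * x ^ ((p : ℝ) + 1) := by
  obtain ⟨C, hC⟩ := exists_norm_sub_taylor_le p hf
  refine ⟨C, fun x hx => ?_⟩
  have hx' : x ∈ Icc (0 : ℝ) 1 := Ioc_subset_Icc_self hx
  have hrem : cutoffTaylorRemainder p 1 f x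
      = f x - ∑ j ∈ range (p + 1), ((x : ℂ) ^ j / (j.factorial : ℂ)) * iteratedDeriv j f 0 := by
    rw [cutoffTaylorRemainder, indicator_of_mem hx', Finset.sum_range_succ]
    ring
  rw [hrem, ← Nat.cast_add_one, Real.rpow_natCast]
  exact hC x hx'

lemma norm_cutoffTaylorRemainder_le_of_one_lt (p : ℕ) (φ : 𝓢(ℝ, ℂ)) :
    ∃ C, ∀ x ∈ Ioi (1 : ℝ), ‖cutoffTaylorRemainder p 1 φ x‖ ≤ C * x ^ ((p : ℝ) - 1) := by
  obtain ⟨K, hK0, hK⟩ := φ.decay 1 0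
  refine ⟨K + ∑ j ∈ range p, ‖iteratedDeriv j φ 0‖, fun x hx => ?_⟩
  have hx1 : (1 : ℝ) < x := hx
  have hx0 : 0 < x := one_pos.trans hx1
  have hrem : cutoffTaylorRemainder p 1 φ x
      = φ x - ∑ j ∈ range p, ((x : ℂ) ^ j / (j.factorial : ℂ)) * iteratedDeriv j φ 0 := by
    rw [cutoffTaylorRemainder, indicator_of_notMem (fun h => hx1.not_ge h.2)]
    ring
  have hφ : ‖φ x‖ ≤ K * x ^ ((p : ℝ) - 1) := by
    have h := hK x
    rw [norm_iteratedFDeriv_zero, pow_one, Real.norm_of_nonneg hx0.le] at h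
    calc ‖φ x‖ ≤ K * x ^ (-1 : ℝ) := by
          rw [Real.rpow_neg_one, ← div_eq_mul_inv, le_div_iff₀ hx0]; linarith
      _ ≤ K * x ^ ((p : ℝ) - 1) := by
          gcongr
          · exact hx1.le
          · linarith [(Nat.cast_nonneg p : (0 : ℝ) ≤ p)]
  have hterm : ∀ j ∈ range p, ‖((x : ℂ) ^ j / (j.factorial : ℂ)) * iteratedDeriv j φ 0‖
      ≤ ‖iteratedDeriv j φ 0‖ * x ^ ((p : ℝ) - 1) := fun j hj => by
    have hj' : (j : ℝ) ≤ p - 1 := by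
      rw [Finset.mem_range] at hj
      have : (j : ℝ) + 1 ≤ p := by exact_mod_cast hj
      linarith
    rw [norm_mul, norm_div, norm_pow, Complex.norm_real, Real.norm_of_nonneg hx0.le,
      Complex.norm_natCast, mul_comm]
    gcongr
    calc x ^ j / j.factorial ≤ x ^ j :=
          div_le_self (by positivity) (by exact_mod_cast j.factorial_pos)
      _ = x ^ (j : ℝ) := (Real.rpow_natCast x j).symm
      _ ≤ x ^ ((p : ℝ) - 1) := Real.rpow_le_rpow_of_exponent_le hx1.le hj'
  rw [hrem, add_mul, Finset.sum_mul]
  exact (norm_sub_le _ _).trans (add_le_add hφ ((norm_sum_le _ _).trans (sum_le_sum hterm)))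

lemma measurable_cutoffTaylorRemainder {f : ℝ → ℂ} (hf : Measurable f) (p : ℕ) (c : ℝ) :
    Measurable (cutoffTaylorRemainder p c f) := by
  unfold cutoffTaylorRemainder
  have : Measurable ((Icc (0 : ℝ) c).indicator fun _ => (1 : ℂ)) :=
    measurable_const.indicator measurableSet_Icc
  fun_prop

lemma norm_ofReal_zpow_neg_mul_log_pow_mul {x : ℝ} (hx : 0 < x) (n m : ℕ) (z : ℂ) :
    ‖(x : ℂ) ^ (-(n : ℤ)) * (Real.log x : ℂ) ^ m * z‖
      = x ^ (-(n : ℝ)) * |Real.log x| ^ m * ‖z‖ := by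
  rw [norm_mul, norm_mul, norm_zpow, norm_pow, Complex.norm_real, Complex.norm_real,
    Real.norm_of_nonneg hx.le, Real.norm_eq_abs, ← Real.rpow_intCast]
  push_cast
  rfl

lemma integrableOn_Freg_integrand (p m : ℕ) (φ : 𝓢(ℝ, ℂ)) :
    IntegrableOn (fun x : ℝ => (x : ℂ) ^ (-((p + 1 : ℕ) : ℤ)) * (Real.log x : ℂ) ^ m *
      cutoffTaylorRemainder p 1 φ x) (Ioi 0) := by
  obtain ⟨C₀, hC₀⟩ := norm_cutoffTaylorRemainder_le_of_le_one p (φ.smooth (p + 1))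
  obtain ⟨C₁, hC₁⟩ := norm_cutoffTaylorRemainder_le_of_one_lt p φ
  obtain ⟨L₀, hL₀⟩ := abs_log_pow_le_rpow_of_le_one m (ε := 1 / 2) (by norm_num)
  obtain ⟨L₁, hL₁⟩ := abs_log_pow_le_rpow_of_one_le m (ε := 1 / 2) (by norm_num)
  have hmeas := measurable_cutoffTaylorRemainder φ.continuous.measurable p 1
  refine integrableOn_Ioi_zero_of_norm_le_rpow (by fun_prop) (s := -(1 / 2)) (t := -(3 / 2))
    (C := L₀ * C₀) (D := L₁ * C₁) (by norm_num) (by norm_num) (fun x hx => ?_) (fun x hx => ?_)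
  · have hx0 : 0 < x := hx.1
    rw [norm_ofReal_zpow_neg_mul_log_pow_mul hx0]
    calc _ ≤ x ^ (-((p + 1 : ℕ) : ℝ)) * (L₀ * x ^ (-(1 / 2) : ℝ)) * (C₀ * x ^ ((p : ℝ) + 1)) := by
          gcongr
          · exact mul_nonneg (by positivity) ((pow_nonneg (abs_nonneg _) m).trans (hL₀ x hx0 hx.2))
          · exact hL₀ x hx0 hx.2
          · exact hC₀ x hx
      _ = L₀ * C₀ * (x ^ (-((p + 1 : ℕ) : ℝ)) * x ^ (-(1 / 2) : ℝ) * x ^ ((p : ℝ) + 1)) := by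
          ring
      _ = L₀ * C₀ * x ^ (-(1 / 2) : ℝ) := by
          rw [← Real.rpow_add hx0, ← Real.rpow_add hx0]; push_cast; ring_nf
  · have hx0 : 0 < x := one_pos.trans hx
    rw [norm_ofReal_zpow_neg_mul_log_pow_mul hx0]
    calc _ ≤ x ^ (-((p + 1 : ℕ) : ℝ)) * (L₁ * x ^ (1 / 2 : ℝ)) * (C₁ * x ^ ((p : ℝ) - 1)) := by
          gcongr
          · exact mul_nonneg (by positivity) ((pow_nonneg (abs_nonneg _) m).trans (hL₁ x hx.le))
          · exact hL₁ x hx.le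
          · exact hC₁ x hx
      _ = L₁ * C₁ * (x ^ (-((p + 1 : ℕ) : ℝ)) * x ^ (1 / 2 : ℝ) * x ^ ((p : ℝ) - 1)) := by
          ring
      _ = L₁ * C₁ * x ^ (-(3 / 2) : ℝ) := by
          rw [← Real.rpow_add hx0, ← Real.rpow_add hx0]; push_cast; ring_nf

lemma cutoffTaylorRemainder_comp_mul {f : ℝ → ℂ} {p : ℕ} (hf : ContDiff ℝ p f) {b : ℝ}
    (hb : 0 < b) (c x : ℝ) :
    cutoffTaylorRemainder p c (fun y => f (b * y)) x
      = cutoffTaylorRemainder p (b * c) f (b * x) := by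
  have hderiv : ∀ j ≤ p,
      iteratedDeriv j (fun y => f (b * y)) 0 = (b : ℂ) ^ j * iteratedDeriv j f 0 :=
    fun j hj => by
      simp only [iteratedDeriv_comp_const_smul (hf.of_le (by exact_mod_cast hj)), mul_zero,
        Complex.real_smul, Complex.ofReal_pow]
  have hmem : b * x ∈ Icc 0 (b * c) ↔ x ∈ Icc 0 c := by
    simp only [Set.mem_Icc, mul_le_mul_iff_right₀ hb, mul_nonneg_iff_of_pos_left hb]
  unfold cutoffTaylorRemainder
  simp only [indicator_apply, hmem]
  rw [hderiv p le_rfl, sum_congr rfl fun j hj => by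
    rw [hderiv j (Finset.mem_range.mp hj).le]]
  push_cast
  congr 2
  · exact sum_congr rfl fun j _ => by ring
  · ring

lemma cutoffTaylorRemainder_eq_add (p : ℕ) (b c : ℝ) (f : ℝ → ℂ) (x : ℝ) :
    cutoffTaylorRemainder p c f x = cutoffTaylorRemainder p b f x
      + (x : ℂ) ^ p / (p.factorial : ℂ) * iteratedDeriv p f 0 *
        (indicator (Icc 0 b) (fun _ => (1 : ℂ)) x - indicator (Icc 0 c) (fun _ => (1 : ℂ)) x) := by
  unfold cutoffTaylorRemainder
  ring

lemma mul_indicator_Icc_sub_indicator_Icc (f : ℝ → ℂ) {b c : ℝ} (hb : 0 ≤ b) (hc : 0 ≤ c) (x : ℝ) :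
    f x * (indicator (Icc 0 b) (fun _ => (1 : ℂ)) x - indicator (Icc 0 c) (fun _ => (1 : ℂ)) x)
      = indicator (Ioc c b) f x - indicator (Ioc b c) f x := by
  simp only [indicator_apply, Set.mem_Icc, Set.mem_Ioc]
  split_ifs <;> grind

lemma integrableOn_mul_indicator_Icc_sub {f : ℝ → ℂ} {b c : ℝ} (hb : 0 ≤ b) (hc : 0 ≤ c)
    (hf : IntervalIntegrable f volume c b) (s : Set ℝ) :
    IntegrableOn (fun x => f x *
      (indicator (Icc 0 b) (fun _ => (1 : ℂ)) x - indicator (Icc 0 c) (fun _ => (1 : ℂ)) x)) s := by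
  simp only [mul_indicator_Icc_sub_indicator_Icc f hb hc]
  exact ((hf.1.integrable_indicator measurableSet_Ioc).sub
    (hf.2.integrable_indicator measurableSet_Ioc)).integrableOn

lemma integral_Ioi_mul_indicator_Icc_sub {f : ℝ → ℂ} {b c : ℝ} (hb : 0 < b) (hc : 0 < c)
    (hf : IntervalIntegrable f volume c b) :
    ∫ x in Ioi 0, f x *
      (indicator (Icc 0 b) (fun _ => (1 : ℂ)) x - indicator (Icc 0 c) (fun _ => (1 : ℂ)) x)
      = ∫ x in c..b, f x := by
  simp only [mul_indicator_Icc_sub_indicator_Icc f hb.le hc.le]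
  rw [integral_sub (hf.1.integrable_indicator measurableSet_Ioc).integrableOn
      (hf.2.integrable_indicator measurableSet_Ioc).integrableOn,
    setIntegral_indicator measurableSet_Ioc, setIntegral_indicator measurableSet_Ioc,
    inter_eq_self_of_subset_right (Ioc_subset_Ioi_self.trans (Ioi_subset_Ioi hc.le)),
    inter_eq_self_of_subset_right (Ioc_subset_Ioi_self.trans (Ioi_subset_Ioi hb.le))]
  rfl

lemma continuousOn_add_log_pow_div (L : ℝ) (k : ℕ) :
    ContinuousOn (fun y : ℝ => (L + Real.log y) ^ k / y) (Ioi 0) :=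
  ((continuousOn_const.add (Real.continuousOn_log.mono fun _ hy => ne_of_gt hy)).pow k).div
    continuousOn_id fun _ hy => ne_of_gt hy

lemma integral_add_log_pow_div (L : ℝ) (k : ℕ) {b c : ℝ} (hb : 0 < b) (hc : 0 < c) :
    ∫ y in b..c, (L + Real.log y) ^ k / y
      = ((L + Real.log c) ^ (k + 1) - (L + Real.log b) ^ (k + 1)) / (k + 1) := by
  have hpos : ∀ y ∈ uIcc b c, 0 < y := fun y hy => (lt_min hb hc).trans_le hy.1
  have hderiv : ∀ y ∈ uIcc b c, HasDerivAt (fun y => (L + Real.log y) ^ (k + 1) / (k + 1))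
      ((L + Real.log y) ^ k / y) y := fun y hy => by
    refine ((((Real.hasDerivAt_log (hpos y hy).ne').const_add L).fun_pow (k + 1)).div_const
      ((k : ℝ) + 1)).congr_deriv ?_
    rw [Nat.add_sub_cancel, Nat.cast_add_one]
    field_simp
  rw [intervalIntegral.integral_eq_sub_of_hasDerivAt hderiv
    ((continuousOn_add_log_pow_div L k).mono hpos).intervalIntegrable]
  ring

lemma integral_add_log_pow_mul_cutoffTaylorRemainder (p k : ℕ) (φ : 𝓢(ℝ, ℂ)) (L : ℝ) {c : ℝ}
    (hc : 0 < c) :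
    ∫ y in Ioi (0 : ℝ), (y : ℂ) ^ (-((p + 1 : ℕ) : ℤ)) * ((L : ℂ) + Real.log y) ^ k *
        cutoffTaylorRemainder p c φ y
      = ∑ r ∈ range (k + 1), (k.choose r : ℂ) * (L : ℂ) ^ r * Freg (p + 1) (k - r) φ
        + iteratedDeriv p φ 0 / p.factorial * ↑(∫ y in c..1, (L + Real.log y) ^ k / y) := by
  set g : ℕ → ℝ → ℂ := fun m y =>
    (y : ℂ) ^ (-((p + 1 : ℕ) : ℤ)) * (Real.log y : ℂ) ^ m * cutoffTaylorRemainder p 1 φ y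
  set h : ℝ → ℂ := fun y => ((L + Real.log y) ^ k / y : ℝ)
  set χ : ℝ → ℂ := fun y =>
    indicator (Icc 0 1) (fun _ => (1 : ℂ)) y - indicator (Icc 0 c) (fun _ => (1 : ℂ)) y
  have hpt : ∀ y ∈ Ioi (0 : ℝ), (y : ℂ) ^ (-((p + 1 : ℕ) : ℤ)) * ((L : ℂ) + Real.log y) ^ k *
      cutoffTaylorRemainder p c φ y
      = ∑ r ∈ range (k + 1), (k.choose r : ℂ) * (L : ℂ) ^ r * g (k - r) y
        + iteratedDeriv p φ 0 / p.factorial * (h y * χ y) := fun y hy => by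
    have hy : (y : ℂ) ≠ 0 := Complex.ofReal_ne_zero.mpr (ne_of_gt hy)
    have hbinom : ∑ r ∈ range (k + 1), (k.choose r : ℂ) * (L : ℂ) ^ r * g (k - r) y
        = (y : ℂ) ^ (-((p + 1 : ℕ) : ℤ)) * ((L : ℂ) + Real.log y) ^ k *
          cutoffTaylorRemainder p 1 φ y := by
      rw [add_pow, Finset.mul_sum, Finset.sum_mul]
      exact sum_congr rfl fun r _ => by ring
    have hpow : (y : ℂ) ^ (-((p + 1 : ℕ) : ℤ)) * (y : ℂ) ^ p = (y : ℂ)⁻¹ := by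
      rw [← zpow_natCast, ← zpow_add₀ hy]; push_cast; ring_nf; exact zpow_neg_one _
    rw [hbinom, cutoffTaylorRemainder_eq_add p 1 c]
    simp only [h, χ, Complex.ofReal_div, Complex.ofReal_pow, Complex.ofReal_add]
    linear_combination ((L : ℂ) + Real.log y) ^ k * iteratedDeriv p φ 0 / p.factorial * χ y * hpow
  have hh : IntervalIntegrable h volume c 1 :=
    (Complex.continuous_ofReal.comp_continuousOn ((continuousOn_add_log_pow_div L k).mono
      fun y hy => (lt_min hc one_pos).trans_le hy.1)).intervalIntegrable
  have hg : ∀ m, IntegrableOn (g m) (Ioi 0) := fun m => integrableOn_Freg_integrand p m φ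
  rw [setIntegral_congr_fun measurableSet_Ioi hpt,
    integral_add (integrable_finsetSum _ fun r _ => (hg (k - r)).const_mul _)
      ((integrableOn_mul_indicator_Icc_sub zero_le_one hc.le hh _).const_mul _),
    integral_finsetSum _ fun r _ => (hg (k - r)).const_mul _, integral_const_mul,
    integral_Ioi_mul_indicator_Icc_sub one_pos hc hh, intervalIntegral.integral_ofReal]
  exact congrArg₂ _ (sum_congr rfl fun r _ => by
    rw [integral_const_mul, Freg_succ_eq_integral]) rfl

lemma Freg_dilate (p k : ℕ) (φ : 𝓢(ℝ, ℂ)) {a : ℝ} (ha : 0 < a) :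
    Freg (p + 1) k (dilate a φ) = (a : ℂ) ^ ((1 : ℤ) - (p + 1 : ℕ)) *
      ∫ y in Ioi (0 : ℝ), (y : ℂ) ^ (-((p + 1 : ℕ) : ℤ)) * ((Real.log a : ℂ) + Real.log y) ^ k *
        cutoffTaylorRemainder p a⁻¹ φ y := by
  set G : ℝ → ℂ := fun x => (x : ℂ) ^ (-((p + 1 : ℕ) : ℤ)) * (Real.log x : ℂ) ^ k *
    cutoffTaylorRemainder p 1 (dilate a φ) x
  have hdil : ⇑(dilate a φ) = fun x => φ (a⁻¹ * x) := funext (dilate_apply a ha.ne' φ)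
  have hpt : ∀ y ∈ Ioi (0 : ℝ), G (a * y) = (a : ℂ) ^ (-((p + 1 : ℕ) : ℤ)) *
      ((y : ℂ) ^ (-((p + 1 : ℕ) : ℤ)) * ((Real.log a : ℂ) + Real.log y) ^ k *
        cutoffTaylorRemainder p a⁻¹ φ y) := fun y hy => by
    simp only [G, hdil, cutoffTaylorRemainder_comp_mul (φ.smooth p) (inv_pos.mpr ha),
      inv_mul_cancel_left₀ ha.ne', mul_one, Complex.ofReal_mul, mul_zpow,
      Real.log_mul ha.ne' (ne_of_gt hy), Complex.ofReal_add]
    ring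
  have hsubst : ∫ x in Ioi 0, G x = a • ∫ y in Ioi 0, G (a * y) := by
    rw [integral_comp_mul_left_Ioi' G 0 ha, mul_zero]
  rw [Freg_succ_eq_integral, hsubst, setIntegral_congr_fun measurableSet_Ioi hpt,
    integral_const_mul, Complex.real_smul, ← mul_assoc, sub_eq_add_neg,
    zpow_add₀ (Complex.ofReal_ne_zero.mpr ha.ne'), zpow_one]

/-- the regularized functional `F_k` applied to the dilated
function `x ↦ φ(x/a)` satisfies
`F_k(φ(·/a)) = a^(−n+1) [ ∑_{r=0}^{k} (k choose r)(log a)^r F_{k−r}(φ)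
  + ((log a)^(k+1)/((k+1)(n−1)!)) φ^(n−1)(0) ]`. -/
theorem stmt_5 (n : ℕ) (hn : 1 ≤ n) (k : ℕ) (φ : 𝓢(ℝ, ℂ)) (a : ℝ) (ha : 0 < a) :
    Freg n k (dilate a φ)
      = (a : ℂ) ^ ((1 : ℤ) - n) *
          ((∑ r ∈ Finset.range (k + 1),
              (k.choose r : ℂ) * (Real.log a : ℂ) ^ r * Freg n (k - r) φ)
            + (Real.log a : ℂ) ^ (k + 1) / (((k : ℂ) + 1) * ((n - 1).factorial : ℂ)) *
                iteratedDeriv (n - 1) (⇑φ) 0) := by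
  obtain ⟨p, rfl⟩ : ∃ p, n = p + 1 := ⟨n - 1, by omega⟩
  have hlog :
      ∫ y in a⁻¹..1, (Real.log a + Real.log y) ^ k / y = Real.log a ^ (k + 1) / (k + 1) := by
    rw [integral_add_log_pow_div _ _ (inv_pos.mpr ha) one_pos, Real.log_one, Real.log_inv,
      add_zero, add_neg_cancel, zero_pow k.succ_ne_zero, sub_zero]
  rw [Freg_dilate p k φ ha, integral_add_log_pow_mul_cutoffTaylorRemainder p k φ _ (inv_pos.mpr ha),
    hlog, Nat.add_sub_cancel]
  congr 2
  push_cast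
  rw [div_mul_eq_div_div]
  ring
end
end

section
/- Let λ ∈ ℂ. Let f₀ and g₀ be tempered distributions on ℝ, homogeneous of degree λ, and let f₁ be a tempered distribution on ℝ such that ⟨f₁, φ(·/a)⟩ = a^{λ+1}(⟨f₁, φ⟩ + (log a)⟨g₀, φ⟩) for every a > 0 and every Schwartz φ. Let H₁, H₂ : (0,∞) → ℂ be differentiable functions, and suppose f₂ is a tempered distribution on ℝ satisfying ⟨f₂, φ(·/a)⟩ = a^{λ+1}⟨f₂, φ⟩ + H₁(a)⟨f₁, φ⟩ + H₂(a)⟨f₀, φ⟩ for every a > 0 and every Schwartz φ. Then there exist tempered distributions f̃₁, f̃₀, g̃₀ on ℝ such that f̃₀ and g̃₀ are homogeneous of degree λ, ⟨f̃₁, φ(·/a)⟩ = a^{λ+1}(⟨f̃₁, φ⟩ + (log a)⟨g̃₀, φ⟩) for every a > 0 and Schwartz φ, and ⟨f₂, φ(·/a)⟩ = a^{λ+1}( ⟨f₂, φ⟩ + (log a)⟨f̃₁, φ⟩ + (log a)²⟨f̃₀, φ⟩ ) for every a > 0 and every Schwartz φ. -/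
open MeasureTheory SchwartzMap Complex Finset

noncomputable section

variable {E : Type*} [NormedAddCommGroup E] [NormedSpace ℝ E]

/-! Write `H i a = a ^ (λ + 1) * K i a`. Computing `⟨f₂, φ(·/(a b))⟩` in two ways shows that
`k a = K₁ a • f₁ + K₂ a • f₀` satisfies `k (a b) = k a + k b + log b • K₁ a • g₀`. Exchanging `a`
and `b` forces `K₁ a • g₀ = log a • c • g₀` with `c = K₁ e`, after which
`t ↦ k (exp t) - (c / 2) t² • g₀` is a continuous additive function, hence linear in `t`. Thus
`k a = log a • (k e - (c / 2) • g₀) + (log a)² • (c / 2) • g₀`. -/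

lemma dilate_dilate {a b : ℝ} (ha : a ≠ 0) (hb : b ≠ 0) (φ : 𝓢(E, ℂ)) :
    dilate a (dilate b φ) = dilate (a * b) φ := by
  ext x
  rw [dilate_apply a ha, dilate_apply b hb, dilate_apply _ (mul_ne_zero ha hb), smul_smul,
    mul_inv_rev]

lemma IsHomogeneous.const_smul {lam : ℂ} {f : 𝓢(ℝ, ℂ) →L[ℂ] ℂ} (hf : IsHomogeneous lam f)
    (c : ℂ) : IsHomogeneous lam (c • f) := by
  intro a ha φ
  simp only [smul_apply, smul_eq_mul, hf a ha φ]
  ring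

lemma ofReal_cpow_ne_zero {a : ℝ} (ha : 0 < a) (s : ℂ) : (a : ℂ) ^ s ≠ 0 := by
  simp [Complex.cpow_eq_zero_iff, ha.ne']

theorem eq_log_quadratic_of_cocycle {k j : ℝ → ℂ} (hk : ContinuousOn k (Set.Ioi 0))
    (hkj : ∀ a b : ℝ, 0 < a → 0 < b → k (a * b) = k a + k b + j a * Real.log b)
    {a : ℝ} (ha : 0 < a) :
    k a = (k (Real.exp 1) - j (Real.exp 1) / 2) * Real.log a
      + j (Real.exp 1) / 2 * (Real.log a) ^ 2 := by
  set e := Real.exp 1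
  set c := j e
  -- comparing `k (a e)` with `k (e a)` shows that `j` is a multiple of `log`
  have hj : ∀ a : ℝ, 0 < a → j a = c * Real.log a := by
    intro a ha
    have h₁ := hkj a e ha (Real.exp_pos 1)
    have h₂ := hkj e a (Real.exp_pos 1) ha
    rw [Real.log_exp, Complex.ofReal_one] at h₁
    rw [mul_comm e a] at h₂
    linear_combination h₂ - h₁
  -- the cross term `j (exp s) * t = c s t` is exactly what the quadratic correction absorbs
  set m : ℝ →+ ℂ :=
    AddMonoidHom.mk' (fun t => k (Real.exp t) - c / 2 * (t : ℂ) ^ 2) fun s t => by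
      simp only [Real.exp_add, hkj _ _ (Real.exp_pos s) (Real.exp_pos t),
        hj _ (Real.exp_pos s), Real.log_exp]
      push_cast
      ring
  have hm : Continuous m :=
    (hk.comp_continuous Real.continuous_exp Real.exp_pos).sub (by fun_prop)
  have hlin := map_real_smul m hm (Real.log a) 1
  simp only [smul_eq_mul, mul_one, Complex.real_smul, m, AddMonoidHom.mk'_apply,
    Real.exp_log ha] at hlin
  push_cast at hlin
  linear_combination hlin

lemma dilate_cocycle {lam : ℂ} {f₀ g₀ f₁ f₂ : 𝓢(ℝ, ℂ) →L[ℂ] ℂ} {H₁ H₂ : ℝ → ℂ}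
    (hf₀ : IsHomogeneous lam f₀)
    (hf₁ : ∀ a : ℝ, 0 < a → ∀ φ : 𝓢(ℝ, ℂ),
      f₁ (dilate a φ) = (a : ℂ) ^ (lam + 1) * (f₁ φ + (Real.log a : ℂ) * g₀ φ))
    (hf₂ : ∀ a : ℝ, 0 < a → ∀ φ : 𝓢(ℝ, ℂ),
      f₂ (dilate a φ) = (a : ℂ) ^ (lam + 1) * f₂ φ + H₁ a * f₁ φ + H₂ a * f₀ φ)
    {a b : ℝ} (ha : 0 < a) (hb : 0 < b) (φ : 𝓢(ℝ, ℂ)) :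
    (H₁ (a * b) * f₁ φ + H₂ (a * b) * f₀ φ) / ((a * b : ℝ) : ℂ) ^ (lam + 1)
      = (H₁ a * f₁ φ + H₂ a * f₀ φ) / (a : ℂ) ^ (lam + 1)
        + (H₁ b * f₁ φ + H₂ b * f₀ φ) / (b : ℂ) ^ (lam + 1)
        + H₁ a / (a : ℂ) ^ (lam + 1) * g₀ φ * Real.log b := by
  have hcomp := congrArg f₂ (dilate_dilate ha.ne' hb.ne' φ)
  rw [hf₂ a ha, hf₂ b hb, hf₁ b hb, hf₀ b hb, hf₂ (a * b) (mul_pos ha hb)] at hcomp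
  have hab : ((a * b : ℝ) : ℂ) ^ (lam + 1) = (a : ℂ) ^ (lam + 1) * (b : ℂ) ^ (lam + 1) := by
    rw [Complex.ofReal_mul, Complex.mul_cpow_ofReal_nonneg ha.le hb.le]
  have ha' := ofReal_cpow_ne_zero ha (lam + 1)
  have hb' := ofReal_cpow_ne_zero hb (lam + 1)
  rw [hab] at hcomp ⊢
  field_simp
  linear_combination -hcomp

/-- if `f₂` satisfies `⟨f₂, φ(·/a)⟩ = a^(λ+1)⟨f₂, φ⟩ + H₁(a)⟨f₁, φ⟩ + H₂(a)⟨f₀, φ⟩`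
with `f₀` homogeneous of degree `λ`, `f₁` an AHD of order 1 with homogeneous component `g₀`,
and `H₁, H₂` differentiable on `(0,∞)`, then `f₂` obeys the canonical order-2 expansion
`⟨f₂, φ(·/a)⟩ = a^(λ+1)(⟨f₂, φ⟩ + (log a)⟨f̃₁, φ⟩ + (log a)²⟨f̃₀, φ⟩)`. -/
theorem stmt_12 (lam : ℂ) (f₀ g₀ f₁ f₂ : 𝓢(ℝ, ℂ) →L[ℂ] ℂ)
    (hf₀ : IsHomogeneous lam f₀) (hg₀ : IsHomogeneous lam g₀)
    (hf₁ : ∀ a : ℝ, 0 < a → ∀ φ : 𝓢(ℝ, ℂ),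
      f₁ (dilate a φ) = (a : ℂ) ^ (lam + 1) * (f₁ φ + (Real.log a : ℂ) * g₀ φ))
    (H₁ H₂ : ℝ → ℂ)
    (hH₁ : ∀ a : ℝ, 0 < a → DifferentiableAt ℝ H₁ a)
    (hH₂ : ∀ a : ℝ, 0 < a → DifferentiableAt ℝ H₂ a)
    (hf₂ : ∀ a : ℝ, 0 < a → ∀ φ : 𝓢(ℝ, ℂ),
      f₂ (dilate a φ) = (a : ℂ) ^ (lam + 1) * f₂ φ + H₁ a * f₁ φ + H₂ a * f₀ φ) :
    ∃ F₁ F₀ G₀ : 𝓢(ℝ, ℂ) →L[ℂ] ℂ,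
      IsHomogeneous lam F₀ ∧ IsHomogeneous lam G₀ ∧
      (∀ a : ℝ, 0 < a → ∀ φ : 𝓢(ℝ, ℂ),
        F₁ (dilate a φ) = (a : ℂ) ^ (lam + 1) * (F₁ φ + (Real.log a : ℂ) * G₀ φ)) ∧
      (∀ a : ℝ, 0 < a → ∀ φ : 𝓢(ℝ, ℂ),
        f₂ (dilate a φ) = (a : ℂ) ^ (lam + 1) *
          (f₂ φ + (Real.log a : ℂ) * F₁ φ + (Real.log a : ℂ) ^ 2 * F₀ φ)) := by
  set c₁ := H₁ (Real.exp 1) / (Real.exp 1 : ℂ) ^ (lam + 1)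
  set c₂ := H₂ (Real.exp 1) / (Real.exp 1 : ℂ) ^ (lam + 1)
  have hcont : ∀ φ : 𝓢(ℝ, ℂ), ContinuousOn
      (fun a : ℝ => (H₁ a * f₁ φ + H₂ a * f₀ φ) / (a : ℂ) ^ (lam + 1)) (Set.Ioi 0) :=
    fun φ a ha => ((((hH₁ a ha).continuousAt.mul continuousAt_const).add
      ((hH₂ a ha).continuousAt.mul continuousAt_const)).div
      (continuousAt_ofReal_cpow_const a _ (Or.inr (ne_of_gt ha)))
      (ofReal_cpow_ne_zero ha _)).continuousWithinAt
  refine ⟨c₁ • f₁ + c₂ • f₀ - (c₁ / 2) • g₀, (c₁ / 2) • g₀, c₁ • g₀,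
    hg₀.const_smul _, hg₀.const_smul _, fun a ha φ => ?_, fun a ha φ => ?_⟩
  · simp only [add_apply, sub_apply, smul_apply, smul_eq_mul, hf₁ a ha φ, hf₀ a ha φ,
      hg₀ a ha φ]
    ring
  · have hquad := eq_log_quadratic_of_cocycle (hcont φ)
      (fun a b ha hb => dilate_cocycle hf₀ hf₁ hf₂ ha hb φ) ha
    have ha' := ofReal_cpow_ne_zero ha (lam + 1)
    have he' := ofReal_cpow_ne_zero (Real.exp_pos 1) (lam + 1)
    simp only [add_apply, sub_apply, smul_apply, smul_eq_mul, hf₂ a ha φ, c₁, c₂]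
    field_simp at hquad ⊢
    linear_combination hquad

end
end

section
/- Define recursively: a tempered distribution f on ℝ is a de6-QAHD of degree λ ∈ ℂ and order k ∈ ℕ if either k = 0 and f is homogeneous of degree λ, or k ≥ 1 and there exist tempered distributions f₀, …, f_{k−1}, where f_j is a de6-QAHD of degree λ and order j, and differentiable functions H₁, …, H_k : (0,∞) → ℂ such that ⟨f, φ(·/a)⟩ = a^{λ+1}⟨f, φ⟩ + Σ_{r=1}^{k} H_r(a)⟨f_{k−r}, φ⟩ for every a > 0 and every Schwartz φ. Theorem: every de6-QAHD of degree λ and order k is a quasi associated homogeneous distribution (QAHD) of degree λ and order k, i.e. the class defined with arbitrary differentiable coefficient functions H_r coincides with the class defined with the specific coefficients a^{λ+1}(log a)^r. -/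
open MeasureTheory SchwartzMap Complex Finset

noncomputable section

variable {E : Type*} [NormedAddCommGroup E] [NormedSpace ℝ E]

/-- Quasi associated homogeneous distribution of degree `λ` and order `k` on `ℝ`:
for `k = 0` a homogeneous distribution of degree `λ`; for `k ≥ 1`, there are QAHDs
`g j` of degree `λ` and order `j` for `j < k` such that
`⟨f, φ(·/a)⟩ = a^(λ+1) ⟨f, φ⟩ + ∑_{r=1}^{k} a^(λ+1) (log a)^r ⟨g (k-r), φ⟩`. -/
inductive IsQAHD (lam : ℂ) : ℕ → (𝓢(ℝ, ℂ) →L[ℂ] ℂ) → Prop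
  | base {f : 𝓢(ℝ, ℂ) →L[ℂ] ℂ} (hf : IsHomogeneous lam f) : IsQAHD lam 0 f
  | step {k : ℕ} (hk : 0 < k) {f : 𝓢(ℝ, ℂ) →L[ℂ] ℂ} (g : ℕ → (𝓢(ℝ, ℂ) →L[ℂ] ℂ))
      (hg : ∀ j, j < k → IsQAHD lam j (g j))
      (hf : ∀ a : ℝ, 0 < a → ∀ φ : 𝓢(ℝ, ℂ),
        f (dilate a φ) = (a : ℂ) ^ (lam + 1) * f φ
          + ∑ r ∈ Finset.Icc 1 k,
              (a : ℂ) ^ (lam + 1) * (Real.log a : ℂ) ^ r * (g (k - r)) φ) :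
      IsQAHD lam k f

/-- A de6-QAHD of degree `λ` and order `k`: for `k = 0` a homogeneous distribution; for
`k ≥ 1`, there are de6-QAHDs `g j` of order `j` for `j < k` and differentiable functions
`H r : (0,∞) → ℂ` (`1 ≤ r ≤ k`) with
`⟨f, φ(·/a)⟩ = a^(λ+1)⟨f, φ⟩ + ∑_{r=1}^{k} H_r(a) ⟨g (k-r), φ⟩`. -/
inductive IsDe6QAHD (lam : ℂ) : ℕ → (𝓢(ℝ, ℂ) →L[ℂ] ℂ) → Prop
  | base {f : 𝓢(ℝ, ℂ) →L[ℂ] ℂ} (hf : IsHomogeneous lam f) : IsDe6QAHD lam 0 f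
  | step {k : ℕ} (hk : 0 < k) {f : 𝓢(ℝ, ℂ) →L[ℂ] ℂ} (g : ℕ → (𝓢(ℝ, ℂ) →L[ℂ] ℂ))
      (H : ℕ → ℝ → ℂ)
      (hg : ∀ j, j < k → IsDe6QAHD lam j (g j))
      (hH : ∀ r, 1 ≤ r → r ≤ k → ∀ a : ℝ, 0 < a → DifferentiableAt ℝ (H r) a)
      (hf : ∀ a : ℝ, 0 < a → ∀ φ : 𝓢(ℝ, ℂ),
        f (dilate a φ) = (a : ℂ) ^ (lam + 1) * f φ
          + ∑ r ∈ Finset.Icc 1 k, H r a * (g (k - r)) φ) :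
      IsDe6QAHD lam k f


/-! Both notions reduce to a *dilation expansion*
`⟨f, φ(·/a)⟩ = a^(λ+1) ∑_{m ≤ k} (log a)^m ⟨c m, φ⟩` with continuous coefficients `c m`
(necessarily `c 0 = f`).

For a de6-QAHD such an expansion is built by induction on the order. In the variable
`t = log a`, the profile `G t = e^{-(λ+1)t} ⟨f, φ(·/eᵗ)⟩` (`dilationProfile`) satisfies, by the
group law of dilations, `G (t + u) = G u + ∑ᵣ hᵣ(t) Pᵣ(u)` with `hᵣ(t) = e^{-(λ+1)t} Hᵣ(eᵗ)` and
`Pᵣ` polynomials coming from the expansions of the lower-order terms. Differentiating in `t` at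
`0` shows that `G'` is a polynomial, hence so is `G`.

Conversely, an expansion of order `k` makes `f` a QAHD: expanding `⟨f, φ(·/(ab))⟩` in two ways
and comparing coefficients of the polynomial in `log a` gives each `c m` an expansion of order
`k - m` (with binomial coefficients), and strong induction on `k` applies. -/

theorem Complex.ofReal_cpow_eq_exp {a : ℝ} (ha : 0 < a) (w : ℂ) :
    (a : ℂ) ^ w = cexp (Real.log a * w) := by
  rw [cpow_def_of_ne_zero (ofReal_ne_zero.mpr ha.ne'), ofReal_log ha.le]

theorem Complex.ofReal_exp_cpow (t : ℝ) (w : ℂ) : (Real.exp t : ℂ) ^ w = cexp (t * w) := by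
  rw [ofReal_cpow_eq_exp (Real.exp_pos t), Real.log_exp]

theorem dilate_one (φ : 𝓢(ℝ, ℂ)) : dilate 1 φ = φ := by
  ext x
  rw [dilate_apply_real _ one_ne_zero, div_one]

theorem dilate_exp_dilate_exp (t u : ℝ) (φ : 𝓢(ℝ, ℂ)) :
    dilate (Real.exp t) (dilate (Real.exp u) φ) = dilate (Real.exp (t + u)) φ := by
  ext x
  rw [dilate_apply_real _ (Real.exp_pos _).ne', dilate_apply_real _ (Real.exp_pos _).ne',
    dilate_apply_real _ (Real.exp_pos _).ne', div_div, Real.exp_add, mul_comm]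

theorem Finset.sum_range_add_pow_mul {R : Type*} [CommSemiring R] (x y : R) (n : ℕ)
    (a : ℕ → R) :
    ∑ m ∈ range n, (x + y) ^ m * a m =
      ∑ s ∈ range n, x ^ s * ∑ j ∈ range (n - s), y ^ j * ((s + j).choose s * a (s + j)) := by
  simp_rw [add_pow, sum_mul, mul_sum]
  rw [← sum_range_diag_flip]
  refine sum_congr rfl fun m _ => sum_congr rfl fun s hs => ?_
  rw [Nat.add_sub_cancel' (Nat.lt_succ_iff.mp (mem_range.mp hs))]
  ring

theorem eq_of_forall_sum_ofReal_pow_mul_eq {n : ℕ} {z w : ℕ → ℂ}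
    (h : ∀ t : ℝ, ∑ m ∈ range n, (t : ℂ) ^ m * z m = ∑ m ∈ range n, (t : ℂ) ^ m * w m)
    {m : ℕ} (hm : m < n) : z m = w m := by
  open Polynomial in
  have hpoly : ∑ i ∈ range n, C (z i) * X ^ i = ∑ i ∈ range n, C (w i) * X ^ i := by
    refine eq_of_infinite_eval_eq _ _ ((Set.infinite_range_of_injective ofReal_injective).mono ?_)
    rintro _ ⟨t, rfl⟩
    simp only [Set.mem_ofPred_eq, eval_finsetSum, eval_mul, eval_C, eval_pow, eval_X]
    simpa only [mul_comm] using h t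
  simpa [finsetSum_coeff, coeff_C_mul_X_pow, hm] using congr_arg (Polynomial.coeff · m) hpoly

theorem hasDerivAt_of_add_eq_add_sum {ι : Type*} (s : Finset ι) {G : ℝ → ℂ}
    {h : ι → ℝ → ℂ} {h' : ι → ℂ} {P : ι → ℝ → ℂ}
    (hG : ∀ t u, G (t + u) = G u + ∑ i ∈ s, h i t * P i u)
    (hh : ∀ i ∈ s, HasDerivAt (h i) (h' i) 0) (u : ℝ) :
    HasDerivAt G (∑ i ∈ s, h' i * P i u) u := by
  have hG' : G = fun v => G u + ∑ i ∈ s, h i (v - u) * P i u :=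
    funext fun v => by rw [← hG, sub_add_cancel]
  rw [hG']
  refine (HasDerivAt.fun_sum fun i hi => ?_).const_add _
  exact (HasDerivAt.comp_sub_const u u (by rw [sub_self]; exact hh i hi)).mul_const _

theorem eq_add_sum_pow_succ_of_hasDerivAt {G : ℝ → ℂ} {n : ℕ} {q : ℕ → ℂ}
    (hG : ∀ u : ℝ, HasDerivAt G (∑ m ∈ range n, q m * (u : ℂ) ^ m) u) (t : ℝ) :
    G t = G 0 + ∑ m ∈ range n, q m / (m + 1) * (t : ℂ) ^ (m + 1) := by
  set F : ℝ → ℂ := fun t => ∑ m ∈ range n, q m / (m + 1) * (t : ℂ) ^ (m + 1)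
  have hF : ∀ u : ℝ, HasDerivAt F (∑ m ∈ range n, q m * (u : ℂ) ^ m) u := fun u =>
    HasDerivAt.fun_sum fun m _ => by
      refine (((hasDerivAt_pow (m + 1) (u : ℂ)).comp_ofReal).const_mul _).congr_deriv ?_
      rw [Nat.add_sub_cancel]
      push_cast
      field_simp
  have hD : ∀ u, HasDerivAt (fun v => G v - F v) 0 u := fun u => by
    have := (hG u).sub (hF u)
    rwa [sub_self] at this
  have := is_const_of_deriv_eq_zero (fun u => (hD u).differentiableAt) (fun u => (hD u).deriv) t 0
  simp only [F, ofReal_zero, ne_eq, add_eq_zero, one_ne_zero, and_false, not_false_eq_true,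
    zero_pow, mul_zero, sum_const_zero, sub_zero] at this
  rw [← this]
  ring

/-- In the variable `t = log a`: `⟨f, φ(·/a)⟩ = a^(λ+1) ∑_{m ≤ k} (log a)^m ⟨c m, φ⟩`. -/
def HasDilationExpansion (lam : ℂ) (k : ℕ) (f : 𝓢(ℝ, ℂ) →L[ℂ] ℂ)
    (c : ℕ → 𝓢(ℝ, ℂ) →L[ℂ] ℂ) : Prop :=
  ∀ (t : ℝ) (φ : 𝓢(ℝ, ℂ)),
    f (dilate (Real.exp t) φ) = cexp (t * (lam + 1)) * ∑ m ∈ range (k + 1), (t : ℂ) ^ m * c m φ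

theorem IsHomogeneous.hasDilationExpansion {lam : ℂ} {f : 𝓢(ℝ, ℂ) →L[ℂ] ℂ}
    (hf : IsHomogeneous lam f) : HasDilationExpansion lam 0 f fun _ => f := fun t φ => by
  rw [hf _ (Real.exp_pos t), ofReal_exp_cpow]
  simp

namespace HasDilationExpansion

variable {lam : ℂ} {k : ℕ} {f : 𝓢(ℝ, ℂ) →L[ℂ] ℂ} {c : ℕ → 𝓢(ℝ, ℂ) →L[ℂ] ℂ}

theorem coeff_zero (h : HasDilationExpansion lam k f c) : c 0 = f := by
  ext φ
  simpa [dilate_one, sum_range_succ'] using (h 0 φ).symm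

theorem apply_dilate (h : HasDilationExpansion lam k f c) {a : ℝ} (ha : 0 < a)
    (φ : 𝓢(ℝ, ℂ)) :
    f (dilate a φ) = (a : ℂ) ^ (lam + 1) * ∑ m ∈ range (k + 1), (Real.log a : ℂ) ^ m * c m φ := by
  rw [ofReal_cpow_eq_exp ha, ← h, Real.exp_log ha]

theorem mono (h : HasDilationExpansion lam k f c) {n : ℕ} (hkn : k ≤ n) :
    HasDilationExpansion lam n f fun m => if m ≤ k then c m else 0 := fun t φ => by
  rw [h t φ, ← sum_range_add_sum_Ico _ (by omega : k + 1 ≤ n + 1),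
    sum_eq_zero (s := Ico _ _) fun m hm => by simp [Nat.not_le.mpr (mem_Ico.mp hm).1], add_zero]
  congr 1
  refine sum_congr rfl fun m hm => ?_
  simp [Nat.lt_succ_iff.mp (mem_range.mp hm)]

theorem coeff (h : HasDilationExpansion lam k f c) {s : ℕ} (hs : s ≤ k) :
    HasDilationExpansion lam (k - s) (c s) fun j => ((s + j).choose s : ℂ) • c (s + j) := by
  intro u φ
  have hpoly : ∀ t : ℝ, ∑ m ∈ range (k + 1), (t : ℂ) ^ m * c m (dilate (Real.exp u) φ) =
      ∑ m ∈ range (k + 1), (t : ℂ) ^ m * (cexp (u * (lam + 1)) *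
        ∑ j ∈ range (k + 1 - m), (u : ℂ) ^ j * ((m + j).choose m * c (m + j) φ)) := fun t => by
    have hcomp := h t (dilate (Real.exp u) φ)
    rw [dilate_exp_dilate_exp, h (t + u) φ, ofReal_add, sum_range_add_pow_mul, add_mul,
      Complex.exp_add, mul_assoc] at hcomp
    simp_rw [mul_left_comm _ (cexp _), ← mul_sum]
    exact (mul_left_cancel₀ (Complex.exp_ne_zero _) hcomp).symm
  rw [eq_of_forall_sum_ofReal_pow_mul_eq hpoly (by omega : s < k + 1), Nat.sub_add_comm hs]
  simp [smul_eq_mul]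

end HasDilationExpansion

theorem isQAHD_of_hasDilationExpansion {lam : ℂ} {k : ℕ} {f : 𝓢(ℝ, ℂ) →L[ℂ] ℂ}
    {c : ℕ → 𝓢(ℝ, ℂ) →L[ℂ] ℂ} (h : HasDilationExpansion lam k f c) : IsQAHD lam k f := by
  induction k using Nat.strong_induction_on generalizing f c with
  | _ k ih =>
  rcases Nat.eq_zero_or_pos k with rfl | hk
  · exact .base fun a ha φ => by simpa [h.coeff_zero] using h.apply_dilate ha φ
  refine .step hk (fun j => c (k - j)) (fun j hj => ?_) fun a ha φ => ?_
  · have hcoeff := h.coeff (s := k - j) (by omega)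
    rw [Nat.sub_sub_self hj.le] at hcoeff
    exact ih j hj hcoeff
  rw [h.apply_dilate ha φ, range_eq_Ico, sum_eq_sum_Ico_succ_bot (by omega : 0 < k + 1), zero_add,
    Ico_add_one_right_eq_Icc, h.coeff_zero, mul_add, mul_sum]
  simp only [pow_zero, one_mul, ← mul_assoc]
  congr 1
  exact sum_congr rfl fun r hr => by rw [Nat.sub_sub_self (mem_Icc.mp hr).2]

def dilationProfile (lam : ℂ) (f : 𝓢(ℝ, ℂ) →L[ℂ] ℂ) (φ : 𝓢(ℝ, ℂ)) (t : ℝ) : ℂ :=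
  cexp (-(t * (lam + 1))) * f (dilate (Real.exp t) φ)

theorem dilationProfile_zero (lam : ℂ) (f : 𝓢(ℝ, ℂ) →L[ℂ] ℂ) (φ : 𝓢(ℝ, ℂ)) :
    dilationProfile lam f φ 0 = f φ := by
  simp [dilationProfile, dilate_one]

theorem apply_dilate_exp_eq_mul_dilationProfile (lam : ℂ) (f : 𝓢(ℝ, ℂ) →L[ℂ] ℂ)
    (φ : 𝓢(ℝ, ℂ)) (t : ℝ) :
    f (dilate (Real.exp t) φ) = cexp (t * (lam + 1)) * dilationProfile lam f φ t := by
  simp only [dilationProfile, ← mul_assoc, ← Complex.exp_add, add_neg_cancel, Complex.exp_zero,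
    one_mul]

theorem dilationProfile_add {ι : Type*} {s : Finset ι} {lam : ℂ} {n : ℕ}
    {f : 𝓢(ℝ, ℂ) →L[ℂ] ℂ} {g : ι → 𝓢(ℝ, ℂ) →L[ℂ] ℂ} {d : ι → ℕ → 𝓢(ℝ, ℂ) →L[ℂ] ℂ}
    {H : ι → ℝ → ℂ} (hg : ∀ i ∈ s, HasDilationExpansion lam n (g i) (d i))
    (hf : ∀ a : ℝ, 0 < a → ∀ φ : 𝓢(ℝ, ℂ),
      f (dilate a φ) = (a : ℂ) ^ (lam + 1) * f φ + ∑ i ∈ s, H i a * g i φ)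
    (φ : 𝓢(ℝ, ℂ)) (t u : ℝ) :
    dilationProfile lam f φ (t + u) = dilationProfile lam f φ u +
      ∑ i ∈ s, cexp (-(t * (lam + 1))) * H i (Real.exp t) *
        ∑ m ∈ range (n + 1), (u : ℂ) ^ m * d i m φ := by
  set P : ι → ℂ := fun i => ∑ m ∈ range (n + 1), (u : ℂ) ^ m * d i m φ
  set S := ∑ i ∈ s, H i (Real.exp t) * P i
  have hexp_add : cexp (-((t + u : ℝ) * (lam + 1))) =
      cexp (-(t * (lam + 1))) * cexp (-(u * (lam + 1))) := by
    rw [← Complex.exp_add]; push_cast; ring_nf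
  have hexp_t : cexp (t * (lam + 1)) * cexp (-(t * (lam + 1))) = 1 := by
    rw [← Complex.exp_add, add_neg_cancel, Complex.exp_zero]
  have hexp_u : cexp (u * (lam + 1)) * cexp (-(u * (lam + 1))) = 1 := by
    rw [← Complex.exp_add, add_neg_cancel, Complex.exp_zero]
  have hsum_u : ∑ i ∈ s, H i (Real.exp t) * g i (dilate (Real.exp u) φ) =
      cexp (u * (lam + 1)) * S := by
    rw [mul_sum]; exact sum_congr rfl fun i hi => by rw [hg i hi u φ]; ring
  have hsum_t : ∑ i ∈ s, cexp (-(t * (lam + 1))) * H i (Real.exp t) * P i =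
      cexp (-(t * (lam + 1))) * S := by
    rw [mul_sum]; exact sum_congr rfl fun i _ => by ring
  simp only [dilationProfile]
  rw [← dilate_exp_dilate_exp, hf _ (Real.exp_pos t), ofReal_exp_cpow, hsum_u, hsum_t, hexp_add]
  linear_combination (cexp (-(u * (lam + 1))) * f (dilate (Real.exp u) φ)) * hexp_t +
    (cexp (-(t * (lam + 1))) * S) * hexp_u

theorem exists_hasDilationExpansion_of_dilate_eq {ι : Type*} {s : Finset ι} {lam : ℂ} {n : ℕ}
    {f : 𝓢(ℝ, ℂ) →L[ℂ] ℂ} {g : ι → 𝓢(ℝ, ℂ) →L[ℂ] ℂ} {d : ι → ℕ → 𝓢(ℝ, ℂ) →L[ℂ] ℂ}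
    {H : ι → ℝ → ℂ} (hg : ∀ i ∈ s, HasDilationExpansion lam n (g i) (d i))
    (hH : ∀ i ∈ s, DifferentiableAt ℝ (H i) 1)
    (hf : ∀ a : ℝ, 0 < a → ∀ φ : 𝓢(ℝ, ℂ),
      f (dilate a φ) = (a : ℂ) ^ (lam + 1) * f φ + ∑ i ∈ s, H i a * g i φ) :
    ∃ c, HasDilationExpansion lam (n + 1) f c := by
  set h : ι → ℝ → ℂ := fun i t => cexp (-(t * (lam + 1))) * H i (Real.exp t)
  have hh : ∀ i ∈ s, HasDerivAt (h i) (deriv (h i) 0) 0 := fun i hi => by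
    have hHexp : DifferentiableAt ℝ (fun t => H i (Real.exp t)) 0 :=
      (Real.exp_zero ▸ hH i hi).comp 0 Real.differentiableAt_exp
    exact ((by fun_prop : DifferentiableAt ℝ (fun t : ℝ => cexp (-(t * (lam + 1)))) 0).mul
      hHexp).hasDerivAt
  set e : ℕ → 𝓢(ℝ, ℂ) →L[ℂ] ℂ := fun m => ∑ i ∈ s, deriv (h i) 0 • d i m
  refine ⟨fun | 0 => f | m + 1 => ((m + 1 : ℂ)⁻¹) • e m, fun t φ => ?_⟩
  have hderiv : ∀ u : ℝ, HasDerivAt (dilationProfile lam f φ)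
      (∑ m ∈ range (n + 1), e m φ * (u : ℂ) ^ m) u := fun u => by
    convert hasDerivAt_of_add_eq_add_sum s (dilationProfile_add hg hf φ) hh u using 1
    simp only [e, _root_.sum_apply, smul_apply, smul_eq_mul, sum_mul, mul_sum]
    rw [sum_comm]
    exact sum_congr rfl fun i _ => sum_congr rfl fun m _ => by ring
  rw [apply_dilate_exp_eq_mul_dilationProfile, eq_add_sum_pow_succ_of_hasDerivAt hderiv t,
    dilationProfile_zero, sum_range_succ' _ (n + 1)]
  simp only [pow_zero, one_mul, smul_apply, smul_eq_mul]
  rw [add_comm (f φ)]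
  congr 2
  exact sum_congr rfl fun m _ => by ring

theorem IsDe6QAHD.exists_hasDilationExpansion {lam : ℂ} {k : ℕ} {f : 𝓢(ℝ, ℂ) →L[ℂ] ℂ}
    (hf : IsDe6QAHD lam k f) : ∃ c, HasDilationExpansion lam k f c := by
  induction hf with
  | base hhom => exact ⟨_, hhom.hasDilationExpansion⟩
  | @step k hk f g H _ hH hdil ih =>
    obtain ⟨n, rfl⟩ := Nat.exists_eq_add_one_of_ne_zero hk.ne'
    choose! d hd using ih
    refine exists_hasDilationExpansion_of_dilate_eq (g := fun r => g (n + 1 - r))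
      (fun r hr => (hd _ ?_).mono (n := n) ?_) (fun r hr => hH r ?_ ?_ 1 one_pos) hdil <;>
    simp only [mem_Icc] at hr <;> omega

/-- every de6-QAHD (with arbitrary differentiable coefficient functions)
of degree `λ` and order `k` is a QAHD of degree `λ` and order `k` (with the specific
coefficients `a^(λ+1) (log a)^r`). -/
theorem stmt_13 (lam : ℂ) (k : ℕ) (f : 𝓢(ℝ, ℂ) →L[ℂ] ℂ)
    (hf : IsDe6QAHD lam k f) : IsQAHD lam k f :=
  isQAHD_of_hasDilationExpansion hf.exists_hasDilationExpansion.choose_spec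

end
end

section
/- Let n ≥ 1, λ ∈ ℂ, k ∈ ℕ, and let f be a tempered distribution on ℝⁿ which is a quasi associated homogeneous distribution of degree λ and order k. Then its Fourier transform ℱf (defined by ⟨ℱf, φ⟩ = ⟨f, ℱφ⟩) is a quasi associated homogeneous distribution of degree −λ−n and order k. -/
/-!
Dilating a Schwartz function by `a` dilates its Fourier transform by `a⁻¹`:
`ℱ(φ(·/a)) = aⁿ (ℱφ)(a·)`. Hence the dilation relation of `f` at scale `a⁻¹` is a dilation
relation of `f ∘ ℱ` at scale `a`, with `aⁿ a^(-(λ+n)) = a^((-λ-n)+n)`, and induction on the order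
carries the lower-order distributions along, composed with `ℱ`.
-/

open MeasureTheory SchwartzMap Complex Finset

noncomputable section

variable {E : Type*} [NormedAddCommGroup E] [NormedSpace ℝ E]

/-- A tempered distribution on `ℝⁿ` is homogeneous of degree `λ` if
`⟨f, φ(·/a)⟩ = a^(λ+n) ⟨f, φ⟩` for all `a > 0` and all Schwartz `φ`. -/
def IsHomogeneousN (n : ℕ) (lam : ℂ)
    (f : 𝓢(EuclideanSpace ℝ (Fin n), ℂ) →L[ℂ] ℂ) : Prop :=
  ∀ a : ℝ, 0 < a → ∀ φ : 𝓢(EuclideanSpace ℝ (Fin n), ℂ),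
    f (dilate a φ) = (a : ℂ) ^ (lam + n) * f φ

/-- The Euler operator `φ ↦ (x ↦ ∑_{j=1}^{n} x_j ∂φ/∂x_j (x))` on Schwartz functions. -/
def eulerOp (n : ℕ) :
    𝓢(EuclideanSpace ℝ (Fin n), ℂ) →L[ℝ] 𝓢(EuclideanSpace ℝ (Fin n), ℂ) :=
  ∑ j : Fin n,
    (SchwartzMap.bilinLeftCLM
        ((ContinuousLinearMap.lsmul ℝ ℝ : ℝ →L[ℝ] ℂ →L[ℝ] ℂ).flip)
        (EuclideanSpace.proj (𝕜 := ℝ) j).hasTemperateGrowth).comp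
      (SchwartzMap.evalCLM ℝ (EuclideanSpace ℝ (Fin n)) ℂ (EuclideanSpace.single j (1 : ℝ)) ∘L
        SchwartzMap.fderivCLM ℝ (EuclideanSpace ℝ (Fin n)) ℂ)

/-- The Euler operator is indeed `x ↦ ∑_j x_j (∂φ/∂x_j)(x)`. -/
lemma eulerOp_apply (n : ℕ) (φ : 𝓢(EuclideanSpace ℝ (Fin n), ℂ))
    (x : EuclideanSpace ℝ (Fin n)) :
    eulerOp n φ x
      = ∑ j : Fin n, x j • fderiv ℝ (⇑φ) x (EuclideanSpace.single j (1 : ℝ)) := by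
  have h1 : (⇑(eulerOp n φ) : EuclideanSpace ℝ (Fin n) → ℂ)
      = ∑ j : Fin n, ⇑((SchwartzMap.bilinLeftCLM
          ((ContinuousLinearMap.lsmul ℝ ℝ : ℝ →L[ℝ] ℂ →L[ℝ] ℂ).flip)
          (EuclideanSpace.proj (𝕜 := ℝ) j).hasTemperateGrowth)
        ((SchwartzMap.evalCLM ℝ (EuclideanSpace ℝ (Fin n)) ℂ (EuclideanSpace.single j (1 : ℝ)) ∘L
        SchwartzMap.fderivCLM ℝ (EuclideanSpace ℝ (Fin n)) ℂ) φ)) := by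
    rw [eulerOp, ContinuousLinearMap.sum_apply]
    exact map_sum (FunLike.coeAddMonoidHom (F := 𝓢(EuclideanSpace ℝ (Fin n), ℂ))
      (α := EuclideanSpace ℝ (Fin n)) (β := ℂ)) _ _
  have h2 := congrFun h1 x
  rw [Finset.sum_apply] at h2
  rw [h2]
  refine Finset.sum_congr rfl fun j _ => ?_
  have h3 : ((SchwartzMap.bilinLeftCLM
        ((ContinuousLinearMap.lsmul ℝ ℝ : ℝ →L[ℝ] ℂ →L[ℝ] ℂ).flip)
        (EuclideanSpace.proj (𝕜 := ℝ) j).hasTemperateGrowth)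
      ((SchwartzMap.evalCLM ℝ (EuclideanSpace ℝ (Fin n)) ℂ (EuclideanSpace.single j (1 : ℝ)) ∘L
        SchwartzMap.fderivCLM ℝ (EuclideanSpace ℝ (Fin n)) ℂ) φ)) x
      = x j • ((SchwartzMap.evalCLM ℝ (EuclideanSpace ℝ (Fin n)) ℂ (EuclideanSpace.single j (1 : ℝ)) ∘L
        SchwartzMap.fderivCLM ℝ (EuclideanSpace ℝ (Fin n)) ℂ) φ) x := rfl
  rw [h3]
  rfl


/-- QAHD of degree `λ` and order `k` on `ℝⁿ`: for `k = 0` a homogeneous distribution of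
degree `λ`; for `k ≥ 1`, there are QAHDs `g j` of degree `λ` and order `j` for `j < k` with
`⟨f, φ(·/a)⟩ = a^(λ+n) ⟨f, φ⟩ + ∑_{r=1}^{k} a^(λ+n) (log a)^r ⟨g (k-r), φ⟩`. -/
inductive IsQAHDN (n : ℕ) (lam : ℂ) :
    ℕ → (𝓢(EuclideanSpace ℝ (Fin n), ℂ) →L[ℂ] ℂ) → Prop
  | base {f : 𝓢(EuclideanSpace ℝ (Fin n), ℂ) →L[ℂ] ℂ} (hf : IsHomogeneousN n lam f) :
      IsQAHDN n lam 0 f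
  | step {k : ℕ} (hk : 0 < k) {f : 𝓢(EuclideanSpace ℝ (Fin n), ℂ) →L[ℂ] ℂ}
      (g : ℕ → (𝓢(EuclideanSpace ℝ (Fin n), ℂ) →L[ℂ] ℂ))
      (hg : ∀ j, j < k → IsQAHDN n lam j (g j))
      (hf : ∀ a : ℝ, 0 < a → ∀ φ : 𝓢(EuclideanSpace ℝ (Fin n), ℂ),
        f (dilate a φ) = (a : ℂ) ^ (lam + n) * f φ
          + ∑ r ∈ Finset.Icc 1 k,
              (a : ℂ) ^ (lam + n) * (Real.log a : ℂ) ^ r * (g (k - r)) φ) :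
      IsQAHDN n lam k f

open FourierTransform RealInnerProductSpace in
theorem Real.fourier_comp_inv_smul {V W : Type*} [NormedAddCommGroup V] [InnerProductSpace ℝ V]
    [FiniteDimensional ℝ V] [MeasurableSpace V] [BorelSpace V]
    [NormedAddCommGroup W] [NormedSpace ℂ W] (f : V → W) {a : ℝ} (ha : a ≠ 0) (ξ : V) :
    𝓕 (fun x => f (a⁻¹ • x)) ξ = |a ^ Module.finrank ℝ V| • 𝓕 f (a • ξ) := by
  have hinner (y : V) : ⟪a • y, ξ⟫ = ⟪y, a • ξ⟫ := by
    rw [real_inner_smul_left, real_inner_smul_right]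
  simp only [Real.fourier_eq]
  calc ∫ x, 𝐞 (-⟪x, ξ⟫) • f (a⁻¹ • x)
      = ∫ x, 𝐞 (-⟪a⁻¹ • x, a • ξ⟫) • f (a⁻¹ • x) := by
        simp only [← hinner, smul_inv_smul₀ ha]
    _ = |a ^ Module.finrank ℝ V| • ∫ y, 𝐞 (-⟪y, a • ξ⟫) • f y :=
        Measure.integral_comp_inv_smul volume (fun y => 𝐞 (-⟪y, a • ξ⟫) • f y) a

section FourierDilate

variable {V : Type*} [NormedAddCommGroup V] [InnerProductSpace ℝ V] [FiniteDimensional ℝ V]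
  [MeasurableSpace V] [BorelSpace V]

theorem fourierTransformCLM_dilate {a : ℝ} (ha : 0 < a) (φ : 𝓢(V, ℂ)) :
    fourierTransformCLM ℂ (dilate a φ)
      = ((a : ℂ) ^ Module.finrank ℝ V) • dilate a⁻¹ (fourierTransformCLM ℂ φ) := by
  ext ξ
  have hφa : (dilate a φ : V → ℂ) = fun x => φ (a⁻¹ • x) := funext (dilate_apply a ha.ne' φ)
  rw [smul_apply, fourierTransformCLM_apply, dilate_apply a⁻¹ (inv_ne_zero ha.ne'), inv_inv,
    fourierTransformCLM_apply, fourier_coe, fourier_coe, hφa,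
    Real.fourier_comp_inv_smul _ ha.ne', abs_of_pos (pow_pos ha _), Complex.real_smul]
  push_cast
  rfl

theorem ContinuousLinearMap.comp_fourierTransformCLM_dilate (f : 𝓢(V, ℂ) →L[ℂ] ℂ)
    {a : ℝ} (ha : 0 < a) (φ : 𝓢(V, ℂ)) :
    (f.comp (fourierTransformCLM ℂ)) (dilate a φ)
      = (a : ℂ) ^ Module.finrank ℝ V * f (dilate a⁻¹ (fourierTransformCLM ℂ φ)) := by
  rw [ContinuousLinearMap.comp_apply, fourierTransformCLM_dilate ha, map_smul, smul_eq_mul]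

end FourierDilate

theorem Complex.ofReal_pow_mul_ofReal_inv_cpow {a : ℝ} (ha : 0 < a) (n : ℕ) (s : ℂ) :
    (a : ℂ) ^ n * ((a⁻¹ : ℝ) : ℂ) ^ s = (a : ℂ) ^ (n - s) := by
  have ha' : (a : ℂ) ≠ 0 := Complex.ofReal_ne_zero.mpr ha.ne'
  rw [Complex.ofReal_inv, Complex.inv_cpow_ofReal_nonneg ha.le, ← Complex.cpow_neg,
    ← Complex.cpow_natCast, ← Complex.cpow_add _ _ ha', sub_eq_add_neg]

theorem IsQAHDN.const_smul {n : ℕ} {lam : ℂ} {k : ℕ}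
    {f : 𝓢(EuclideanSpace ℝ (Fin n), ℂ) →L[ℂ] ℂ} (c : ℂ)
    (hf : IsQAHDN n lam k f) : IsQAHDN n lam k (c • f) := by
  induction hf with
  | base hf =>
      refine .base fun a ha φ => ?_
      simp only [smul_apply, smul_eq_mul, hf a ha φ]
      ring
  | step hk g _ hrel ih =>
      refine .step hk (fun j => c • g j) ih fun a ha φ => ?_
      simp only [smul_apply, smul_eq_mul, hrel a ha φ, mul_add, Finset.mul_sum]
      congr 1
      · ring
      · exact Finset.sum_congr rfl fun r _ => by ring

theorem stmt_18_general (n : ℕ) (lam : ℂ) (k : ℕ)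
    (f : 𝓢(EuclideanSpace ℝ (Fin n), ℂ) →L[ℂ] ℂ)
    (hf : IsQAHDN n lam k f) :
    IsQAHDN n (-lam - n) k
      (f.comp (SchwartzMap.fourierTransformCLM ℂ
        (V := EuclideanSpace ℝ (Fin n)) (E := ℂ))) := by
  have hdeg (a : ℝ) (ha : 0 < a) :
      (a : ℂ) ^ n * ((a⁻¹ : ℝ) : ℂ) ^ (lam + n) = (a : ℂ) ^ (-lam - n + n) := by
    rw [Complex.ofReal_pow_mul_ofReal_inv_cpow ha]
    ring_nf
  induction hf with
  | base hf =>
      refine .base fun a ha φ => ?_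
      rw [ContinuousLinearMap.comp_fourierTransformCLM_dilate _ ha, finrank_euclideanSpace_fin,
        hf a⁻¹ (inv_pos.mpr ha), ← mul_assoc, hdeg a ha, ContinuousLinearMap.comp_apply]
  | @step k hk f g _ hrel ih =>
      -- `log a⁻¹ = -log a` puts the sign `(-1) ^ r` on the `r`-th term.
      refine .step hk (fun j => (-1 : ℂ) ^ (k - j) • (g j).comp (fourierTransformCLM ℂ))
        (fun j hj => (ih j hj).const_smul _) fun a ha φ => ?_
      rw [ContinuousLinearMap.comp_fourierTransformCLM_dilate _ ha, finrank_euclideanSpace_fin,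
        hrel a⁻¹ (inv_pos.mpr ha), mul_add, ← mul_assoc, hdeg a ha, Finset.mul_sum,
        ContinuousLinearMap.comp_apply]
      congr 1
      refine Finset.sum_congr rfl fun r hr => ?_
      rw [Nat.sub_sub_self (Finset.mem_Icc.mp hr).2, Real.log_inv, smul_apply,
        ContinuousLinearMap.comp_apply, smul_eq_mul, ← hdeg a ha]
      push_cast
      ring

/-- the Fourier transform `ℱf = f ∘ ℱ` (with `⟨ℱf, φ⟩ = ⟨f, ℱφ⟩`) of a QAHD
of degree `λ` and order `k` on `ℝⁿ` is a QAHD of degree `−λ−n` and order `k`. -/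
theorem stmt_18 (n : ℕ) (hn : 1 ≤ n) (lam : ℂ) (k : ℕ)
    (f : 𝓢(EuclideanSpace ℝ (Fin n), ℂ) →L[ℂ] ℂ)
    (hf : IsQAHDN n lam k f) :
    IsQAHDN n (-lam - n) k
      (f.comp (SchwartzMap.fourierTransformCLM ℂ
        (V := EuclideanSpace ℝ (Fin n)) (E := ℂ))) :=
  stmt_18_general n lam k f hf

end
end
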